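/- Let G be a cubic graph and M1, M2 disjoint matchings with |M1 ∪ M2| maximum. Suppose u1u2u3u4 is a path component (P4) of G − M1 − M2, with v2, v3 the neighbors of u2, u3 outside the path. Then the edges u2v2 and u3v3 lie in the same connected component of the graph G[M1 ∪ M2], and that component is a path. -/

import Mathlib

open SimpleGraph

/-- A matching in `G` given as a set of edges: edges of `G`, pairwise vertex-disjoint. -/
def IsMatchingSet {V : Type*} (G : SimpleGraph V) (M : Set (Sym2 V)) : Prop :=
  M ⊆ G.edgeSet ∧ ∀ e ∈ M, ∀ f ∈ M, e ≠ f → ∀ v, v ∈ e → v ∉ f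

/-- `M1, M2` are disjoint matchings of `G` with `|M1 ∪ M2|` maximum over all pairs of
disjoint matchings of `G`. -/
def MaxDisjointPair {V : Type*} (G : SimpleGraph V) (M1 M2 : Set (Sym2 V)) : Prop :=
  IsMatchingSet G M1 ∧ IsMatchingSet G M2 ∧ Disjoint M1 M2 ∧
  ∀ N1 N2 : Set (Sym2 V), IsMatchingSet G N1 → IsMatchingSet G N2 → Disjoint N1 N2 →
    (N1 ∪ N2).ncard ≤ (M1 ∪ M2).ncard

/-- Adjacency in `Ĝ = G − M1 − M2`: adjacency via an edge of `G` not in `M1 ∪ M2`. -/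
def hatAdj {V : Type*} (G : SimpleGraph V) (M1 M2 : Set (Sym2 V)) (x y : V) : Prop :=
  G.Adj x y ∧ s(x, y) ∉ M1 ∪ M2

/-- The vertices `u1 u2 u3 u4` form a path (`P4`) connected component of
`Ĝ = G − M1 − M2`. -/
def IsP4Component {V : Type*} (G : SimpleGraph V) (M1 M2 : Set (Sym2 V))
    (u1 u2 u3 u4 : V) : Prop :=
  u1 ≠ u2 ∧ u1 ≠ u3 ∧ u1 ≠ u4 ∧ u2 ≠ u3 ∧ u2 ≠ u4 ∧ u3 ≠ u4 ∧
  hatAdj G M1 M2 u1 u2 ∧ hatAdj G M1 M2 u2 u3 ∧ hatAdj G M1 M2 u3 u4 ∧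
  (∀ w, hatAdj G M1 M2 u1 w → w = u2) ∧
  (∀ w, hatAdj G M1 M2 u2 w → w = u1 ∨ w = u3) ∧
  (∀ w, hatAdj G M1 M2 u3 w → w = u2 ∨ w = u4) ∧
  (∀ w, hatAdj G M1 M2 u4 w → w = u3)

/-!
Write `H = G[M1 ∪ M2]`. Since `G` is cubic and `u1u2, u2u3, u3u4` avoid `M1 ∪ M2`, the only edges
of `M1 ∪ M2` at `u2` and `u3` are `u2v2` and `u3v3`. If `u2` and `u3` lay in different components
of `H`, exchanging `M1` and `M2` on the component of `u3` would give another maximum pair in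
which `u2v2` and `u3v3` belong to the same matching; the edge `u2u3` could then be
added to the other matching, contradicting maximality. As `H` has maximum degree two, a cycle of
`H` is a whole component, so the component of `u2`, in which `u2` has degree at most one, contains
no cycle.
-/

section

variable {V : Type*} {G : SimpleGraph V} {M M1 M2 Q : Set (Sym2 V)}

lemma IsMatchingSet.eq_of_mem_of_mem (hM : IsMatchingSet G M) {w y z : V}
    (hy : s(w, y) ∈ M) (hz : s(w, z) ∈ M) : y = z := by
  by_contra hyz
  exact hM.2 _ hy _ hz (fun h => hyz (Sym2.congr_right.mp h)) w
    (Sym2.mem_mk_left w y) (Sym2.mem_mk_left w z)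

lemma encard_neighborSet_fromEdgeSet_union_le_two (h1 : IsMatchingSet G M1)
    (h2 : IsMatchingSet G M2) (w : V) :
    ((fromEdgeSet (M1 ∪ M2)).neighborSet w).encard ≤ 2 := by
  have partners_le_one : ∀ {M}, IsMatchingSet G M → {x | s(w, x) ∈ M}.encard ≤ 1 :=
    fun hM => Set.encard_le_one_iff.mpr fun _ _ hy hz => hM.eq_of_mem_of_mem hy hz
  calc ((fromEdgeSet (M1 ∪ M2)).neighborSet w).encard
      ≤ ({x | s(w, x) ∈ M1} ∪ {x | s(w, x) ∈ M2}).encard :=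
        Set.encard_le_encard fun _ hx => ((fromEdgeSet_adj _).mp hx).1
    _ ≤ {x | s(w, x) ∈ M1}.encard + {x | s(w, x) ∈ M2}.encard := Set.encard_union_le _ _
    _ ≤ 2 := by
        have := add_le_add (partners_le_one h1) (partners_le_one h2)
        rwa [one_add_one_eq_two] at this

lemma MaxDisjointPair.symm (h : MaxDisjointPair G M1 M2) : MaxDisjointPair G M2 M1 :=
  ⟨h.2.1, h.1, h.2.2.1.symm, fun N1 N2 hN1 hN2 hN => by
    rw [Set.union_comm M2 M1]; exact h.2.2.2 N1 N2 hN1 hN2 hN⟩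

lemma MaxDisjointPair.exists_incident_mem_right [Finite V] (h : MaxDisjointPair G M1 M2)
    {e : Sym2 V} (heG : e ∈ G.edgeSet) (heM : e ∉ M1 ∪ M2) :
    ∃ f ∈ M2, ∃ v ∈ e, v ∈ f := by
  obtain ⟨h1, h2, hd, hmax⟩ := h
  by_contra! hfree
  have hN2 : IsMatchingSet G (insert e M2) := by
    refine ⟨Set.insert_subset heG h2.1, ?_⟩
    rintro f (rfl | hf) g (rfl | hg) hfg v hvf hvg
    · exact hfg rfl
    · exact hfree g hg v hvf hvg
    · exact hfree f hf v hvg hvf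
    · exact h2.2 f hf g hg hfg v hvf hvg
  have hdisj : Disjoint M1 (insert e M2) :=
    Set.disjoint_insert_right.mpr ⟨fun he => heM (Or.inl he), hd⟩
  have hle := hmax M1 (insert e M2) h1 hN2 hdisj
  rw [Set.union_insert, Set.ncard_insert_of_notMem heM (Set.toFinite _)] at hle
  omega

lemma MaxDisjointPair.exists_incident_mem_left [Finite V] (h : MaxDisjointPair G M1 M2)
    {e : Sym2 V} (heG : e ∈ G.edgeSet) (heM : e ∉ M1 ∪ M2) :
    ∃ f ∈ M1, ∃ v ∈ e, v ∈ f :=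
  h.symm.exists_incident_mem_right heG (Set.union_comm M1 M2 ▸ heM)

def swapOn (M1 M2 Q : Set (Sym2 V)) : Set (Sym2 V) := (M1 \ Q) ∪ (M2 ∩ Q)

lemma swapOn_union_swapOn : swapOn M1 M2 Q ∪ swapOn M2 M1 Q = M1 ∪ M2 := by
  ext e
  by_cases he : e ∈ Q <;> simp [swapOn, he, or_comm]

lemma Disjoint.swapOn (hd : Disjoint M1 M2) : Disjoint (swapOn M1 M2 Q) (swapOn M2 M1 Q) := by
  rw [Set.disjoint_left]
  rintro e (he | he) (he' | he')
  · exact hd.le_bot ⟨he.1, he'.1⟩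
  · exact he.2 he'.2
  · exact he'.2 he.2
  · exact hd.le_bot ⟨he'.1, he.1⟩

lemma IsMatchingSet.swapOn (h1 : IsMatchingSet G M1) (h2 : IsMatchingSet G M2)
    (hQ : ∀ e ∈ Q, ∀ f ∈ M1, ∀ v ∈ e, v ∈ f → f ∈ Q) : IsMatchingSet G (swapOn M1 M2 Q) := by
  refine ⟨Set.union_subset (Set.sdiff_subset.trans h1.1) (Set.inter_subset_left.trans h2.1), ?_⟩
  rintro f (hf | hf) g (hg | hg) hfg v hvf hvg
  · exact h1.2 f hf.1 g hg.1 hfg v hvf hvg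
  · exact hf.2 (hQ g hg.2 f hf.1 v hvg hvf)
  · exact hg.2 (hQ f hf.2 g hg.1 v hvf hvg)
  · exact h2.2 f hf.1 g hg.1 hfg v hvf hvg

lemma MaxDisjointPair.swapOn (h : MaxDisjointPair G M1 M2)
    (hQ : ∀ e ∈ Q, ∀ f ∈ M1 ∪ M2, ∀ v ∈ e, v ∈ f → f ∈ Q) :
    MaxDisjointPair G (swapOn M1 M2 Q) (swapOn M2 M1 Q) := by
  obtain ⟨h1, h2, hd, hmax⟩ := h
  refine ⟨h1.swapOn h2 fun e he f hf => hQ e he f (Or.inl hf),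
    h2.swapOn h1 fun e he f hf => hQ e he f (Or.inr hf), hd.swapOn, ?_⟩
  rw [swapOn_union_swapOn]
  exact hmax

lemma reachable_fromEdgeSet_of_mem {e : Sym2 V} (he : e ∈ M) {x y : V}
    (hx : x ∈ e) (hy : y ∈ e) : (fromEdgeSet M).Reachable x y := by
  obtain rfl | hxy := eq_or_ne x y
  · rfl
  · rw [(Sym2.mem_and_mem_iff hxy).mp ⟨hx, hy⟩] at he
    exact ((fromEdgeSet_adj M).mpr ⟨he, hxy⟩).reachable

theorem MaxDisjointPair.reachable_of_adj [Finite V] (h : MaxDisjointPair G M1 M2) {a b : V}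
    (hab : G.Adj a b) (habM : s(a, b) ∉ M1 ∪ M2)
    (hunique : ∀ v ∈ s(a, b), {f | f ∈ M1 ∪ M2 ∧ v ∈ f}.Subsingleton) :
    (fromEdgeSet (M1 ∪ M2)).Reachable a b := by
  set H := fromEdgeSet (M1 ∪ M2)
  by_contra hR
  obtain ⟨f, hf2, p, hpe, hpf⟩ := h.exists_incident_mem_right hab habM
  obtain ⟨g, hg1, q, hqe, hqg⟩ := h.exists_incident_mem_left hab habM
  have hpq : p ≠ q := by
    rintro rfl
    have hgf : g = f := hunique p hpe ⟨Or.inl hg1, hqg⟩ ⟨Or.inr hf2, hpf⟩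
    exact h.2.2.1.ne_of_mem hg1 hf2 hgf
  have hpq_edge : s(a, b) = s(p, q) := (Sym2.mem_and_mem_iff hpq).mp ⟨hpe, hqe⟩
  have hqp : ¬ H.Reachable q p := by
    rcases Sym2.eq_iff.mp hpq_edge with ⟨rfl, rfl⟩ | ⟨rfl, rfl⟩
    · exact fun h => hR h.symm
    · exact hR
  -- After exchanging `M1` and `M2` on the component of `q`, the only edges of `M1 ∪ M2` at `a`
  -- and `b`, namely `f` and `g`, both lie in the second matching, so `ab` fits into the first.
  set Q := {e | e ∈ M1 ∪ M2 ∧ ∃ x ∈ e, H.Reachable q x}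
  have hQ : ∀ e ∈ Q, ∀ k ∈ M1 ∪ M2, ∀ v ∈ e, v ∈ k → k ∈ Q :=
    fun e ⟨he, x, hx, hqx⟩ k hk v hv hvk =>
      ⟨hk, v, hvk, hqx.trans (reachable_fromEdgeSet_of_mem he hx hv)⟩
  have hfQ : f ∉ Q := fun ⟨_, x, hx, hqx⟩ =>
    hqp (hqx.trans (reachable_fromEdgeSet_of_mem (Or.inr hf2) hx hpf))
  have hgQ : g ∈ Q := ⟨Or.inl hg1, q, hqg, .rfl⟩
  obtain ⟨k, hk, r, hre, hrk⟩ := (h.swapOn hQ).exists_incident_mem_left hab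
    (by rwa [swapOn_union_swapOn])
  have hkM : k ∈ M1 ∪ M2 := swapOn_union_swapOn (M1 := M1) ▸ Or.inl hk
  have hk' : k ∈ _root_.swapOn M2 M1 Q := by
    rw [hpq_edge, Sym2.mem_iff] at hre
    rcases hre with rfl | rfl
    · rw [hunique r hpe ⟨hkM, hrk⟩ ⟨Or.inr hf2, hpf⟩]
      exact Or.inl ⟨hf2, hfQ⟩
    · rw [hunique r hqe ⟨hkM, hrk⟩ ⟨Or.inl hg1, hqg⟩]
      exact Or.inr ⟨hg1, hgQ⟩
  exact Set.disjoint_left.mp h.2.2.1.swapOn hk hk'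

namespace SimpleGraph.Walk.IsCycle

variable {H : SimpleGraph V} {u w : V} {p : H.Walk u u}

lemma neighborSet_toSubgraph_eq (hp : p.IsCycle)
    (hdeg : ∀ y, (H.neighborSet y).encard ≤ 2) (hw : w ∈ p.support) :
    p.toSubgraph.neighborSet w = H.neighborSet w := by
  have htwo := hp.ncard_neighborSet_toSubgraph_eq_two hw
  have hfin : (p.toSubgraph.neighborSet w).Finite := Set.finite_of_ncard_ne_zero (by omega)
  refine hfin.eq_of_subset_of_encard_le (p.toSubgraph.neighborSet_subset w) ?_
  rw [← hfin.cast_ncard_eq, htwo]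
  exact hdeg w

lemma mem_support_of_reachable (hp : p.IsCycle) (hdeg : ∀ y, (H.neighborSet y).encard ≤ 2)
    (hw : H.Reachable u w) : w ∈ p.support := by
  rw [← p.mem_verts_toSubgraph]
  refine hw.mem_subgraphVerts (fun x hx y hxy => ?_) p.start_mem_verts_toSubgraph
  rw [← Subgraph.mem_neighborSet,
    hp.neighborSet_toSubgraph_eq hdeg (p.mem_verts_toSubgraph.mp hx)]
  exact hxy

lemma not_subsingleton_neighborSet (hp : p.IsCycle) (hw : w ∈ p.support) :
    ¬ (H.neighborSet w).Subsingleton := fun hsub => by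
  obtain ⟨x, y, hxy, hpair⟩ := Set.ncard_eq_two.mp (hp.ncard_neighborSet_toSubgraph_eq_two hw)
  have hsub' := hsub.anti (p.toSubgraph.neighborSet_subset w)
  rw [hpair] at hsub'
  exact hxy (hsub' (Set.mem_insert x {y}) (Set.mem_insert_of_mem x rfl))

end SimpleGraph.Walk.IsCycle

lemma eq_of_adj_of_degree_eq_three {u x y z w : V} [Fintype (G.neighborSet u)]
    (hu : G.degree u = 3) (hx : G.Adj u x) (hy : G.Adj u y) (hz : G.Adj u z)
    (hxy : x ≠ y) (hxz : x ≠ z) (hyz : y ≠ z) (hw : G.Adj u w) : w = x ∨ w = y ∨ w = z := by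
  classical
  have hsub : ({x, y, z} : Finset V) ⊆ G.neighborFinset u := by
    simp [Finset.insert_subset_iff, hx, hy, hz]
  have hcard : (G.neighborFinset u).card ≤ ({x, y, z} : Finset V).card := by
    rw [card_neighborFinset_eq_degree, hu, Finset.card_eq_three.mpr ⟨x, y, z, hxy, hxz, hyz, rfl⟩]
  have hmem : w ∈ ({x, y, z} : Finset V) := by
    rw [Finset.eq_of_subset_of_card_le hsub hcard]
    simpa using hw
  simpa using hmem

lemma eq_of_mem_of_degree_eq_three (hMG : M ⊆ G.edgeSet) {u x y z : V}
    [Fintype (G.neighborSet u)] (hu : G.degree u = 3)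
    (hx : G.Adj u x) (hy : G.Adj u y) (hz : G.Adj u z) (hxy : x ≠ y) (hxz : x ≠ z) (hyz : y ≠ z)
    (hxM : s(u, x) ∉ M) (hyM : s(u, y) ∉ M) {f : Sym2 V} (hf : f ∈ M) (huf : u ∈ f) :
    f = s(u, z) := by
  obtain ⟨w, rfl⟩ : ∃ w, f = s(u, w) := ⟨Sym2.Mem.other huf, (Sym2.other_spec huf).symm⟩
  rcases eq_of_adj_of_degree_eq_three hu hx hy hz hxy hxz hyz (hMG hf) with rfl | rfl | rfl
  · exact absurd hf hxM
  · exact absurd hf hyM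
  · rfl

end

theorem stmt9 {V : Type*} [Fintype V] (G : SimpleGraph V) [DecidableRel G.Adj]
    (hcubic : ∀ v : V, G.degree v = 3) (M1 M2 : Set (Sym2 V))
    (hmax : MaxDisjointPair G M1 M2)
    (u1 u2 u3 u4 : V) (hP : IsP4Component G M1 M2 u1 u2 u3 u4)
    (v2 v3 : V) (hv2 : G.Adj u2 v2) (hv2' : v2 ≠ u1) (hv2'' : v2 ≠ u3)
    (hv3 : G.Adj u3 v3) (hv3' : v3 ≠ u2) (hv3'' : v3 ≠ u4) :
    -- the edges `u2v2` and `u3v3` lie in the same connected component of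
    -- `G[M1 ∪ M2]`, and that component is a path (contains no cycle)
    (SimpleGraph.fromEdgeSet (M1 ∪ M2)).Reachable u2 u3 ∧
      ∀ v : V, (SimpleGraph.fromEdgeSet (M1 ∪ M2)).Reachable u2 v →
        ∀ p : (SimpleGraph.fromEdgeSet (M1 ∪ M2)).Walk v v, ¬ p.IsCycle := by
  obtain ⟨-, h13, -, -, h24, -, ha12, ha23, ha34, -, -, -, -⟩ := hP
  have hMG : M1 ∪ M2 ⊆ G.edgeSet := Set.union_subset hmax.1.1 hmax.2.1.1
  have hu2 : ∀ f ∈ M1 ∪ M2, u2 ∈ f → f = s(u2, v2) := fun f hf =>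
    eq_of_mem_of_degree_eq_three hMG (hcubic u2) ha12.1.symm ha23.1 hv2 h13 hv2'.symm
      hv2''.symm (Sym2.eq_swap ▸ ha12.2) ha23.2 hf
  have hu3 : ∀ f ∈ M1 ∪ M2, u3 ∈ f → f = s(u3, v3) := fun f hf =>
    eq_of_mem_of_degree_eq_three hMG (hcubic u3) ha23.1.symm ha34.1 hv3 h24 hv3'.symm
      hv3''.symm (Sym2.eq_swap ▸ ha23.2) ha34.2 hf
  refine ⟨hmax.reachable_of_adj ha23.1 ha23.2 fun v hv => ?_, fun v hv p hp => ?_⟩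
  · rcases Sym2.mem_iff.mp hv with rfl | rfl
    · exact fun f ⟨hf, hvf⟩ g ⟨hg, hvg⟩ => (hu2 f hf hvf).trans (hu2 g hg hvg).symm
    · exact fun f ⟨hf, hvf⟩ g ⟨hg, hvg⟩ => (hu3 f hf hvf).trans (hu3 g hg hvg).symm
  · have hdeg := encard_neighborSet_fromEdgeSet_union_le_two hmax.1 hmax.2.1
    refine hp.not_subsingleton_neighborSet (hp.mem_support_of_reachable hdeg hv.symm) ?_
    refine (Set.subsingleton_singleton (a := v2)).anti fun x hx => ?_
    exact Sym2.congr_right.mp (hu2 _ ((fromEdgeSet_adj _).mp hx).1 (Sym2.mem_mk_left u2 x))
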